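/- arXiv:1801.08090 — 2 statements merged into one kernel-verified Lean document; each statement's English description precedes it below -/
import Mathlib

section
/- Distribution of each operator over itself: for compatible channels C₁ : X×Y₁ → ℝ, C₂ : X×Y₂ → ℝ, C₃ : X×Y₃ → ℝ and p, q ∈ [0,1], (i) (C₁ ∥ C₂) ∥ (C₁ ∥ C₃) ⊑ C₁ ∥ (C₂ ∥ C₃); (ii) C₁ ⊞_p (C₂ ⊞_q C₃) ≡ (C₁ ⊞_p C₂) ⊞_q (C₁ ⊞_p C₃); and (iii) C₁ ⊕_p (C₂ ⊕_q C₃) = (C₁ ⊕_p C₂) ⊕_q (C₁ ⊕_p C₃). -/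
open Finset

/-- A channel with input set `X` and output set `Y`: entries are nonnegative
and each row sums to `1`. -/
def IsChannel {X Y : Type*} [Fintype Y] (C : X → Y → ℝ) : Prop :=
  (∀ x y, 0 ≤ C x y) ∧ ∀ x, ∑ y, C x y = 1

/-- A channel with input set `X` whose output set is the finset `S` of a common
ambient type `Ω`: entries are nonnegative, each row sums to `1` over `S`, and
entries vanish outside `S`. -/
def IsChannelOn {X Ω : Type*} (S : Finset Ω) (C : X → Ω → ℝ) : Prop :=
  (∀ x y, 0 ≤ C x y) ∧ (∀ x, ∑ y ∈ S, C x y = 1) ∧ ∀ x y, y ∉ S → C x y = 0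

/-- Parallel composition `C₁ ∥ C₂`. -/
def par {X Y₁ Y₂ : Type*} (C₁ : X → Y₁ → ℝ) (C₂ : X → Y₂ → ℝ) : X → Y₁ × Y₂ → ℝ :=
  fun x y => C₁ x y.1 * C₂ x y.2

/-- Visible choice `C₁ ⊞_p C₂`, on the disjoint union of the output sets. -/
def vis {X Y₁ Y₂ : Type*} (p : ℝ) (C₁ : X → Y₁ → ℝ) (C₂ : X → Y₂ → ℝ) : X → Y₁ ⊕ Y₂ → ℝ :=
  fun x => Sum.elim (fun y => p * C₁ x y) (fun y => (1 - p) * C₂ x y)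

/-- Hidden choice `C₁ ⊕_p C₂` for channels whose output sets lie in a common
ambient type (pointwise convex combination; this agrees with the case analysis
on `Y₁ ∩ Y₂`, `Y₁ \ Y₂`, `Y₂ \ Y₁` since channels vanish outside their output sets). -/
def hid {X Ω : Type*} (p : ℝ) (C₁ C₂ : X → Ω → ℝ) : X → Ω → ℝ :=
  fun x y => p * C₁ x y + (1 - p) * C₂ x y

/-- Equality up to a permutation of the output set, `C₁ ≐ C₂`. -/
def PermEq {X Y₁ Y₂ : Type*} (C₁ : X → Y₁ → ℝ) (C₂ : X → Y₂ → ℝ) : Prop :=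
  ∃ ψ : Y₁ ≃ Y₂, ∀ x y, C₁ x y = C₂ x (ψ y)

/-- Cascading `CD` of channels. -/
def cascade {X Y Z : Type*} [Fintype Y] (C : X → Y → ℝ) (D : Y → Z → ℝ) : X → Z → ℝ :=
  fun x z => ∑ y, C x y * D y z

/-- `Refines C₁ C₂` (written `C₁ ⊑ C₂`): there is a channel `D` with `C₁D = C₂`. -/
def Refines {X Y₁ Y₂ : Type*} [Fintype Y₁] [Fintype Y₂] (C₁ : X → Y₁ → ℝ)
    (C₂ : X → Y₂ → ℝ) : Prop :=
  ∃ D : Y₁ → Y₂ → ℝ, IsChannel D ∧ cascade C₁ D = C₂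

/-- Equivalence of channels: mutual refinement. -/
def EquivCh {X Y₁ Y₂ : Type*} [Fintype Y₁] [Fintype Y₂] (C₁ : X → Y₁ → ℝ)
    (C₂ : X → Y₂ → ℝ) : Prop :=
  Refines C₁ C₂ ∧ Refines C₂ C₁

/-- A prior: a probability distribution on the finite input set `X`. -/
def IsPrior {X : Type*} [Fintype X] (π : X → ℝ) : Prop :=
  (∀ x, 0 ≤ π x) ∧ ∑ x, π x = 1

/-- A gain function `g : W × X → [0,1]`. -/
def IsGain {W X : Type*} (g : W → X → ℝ) : Prop :=
  ∀ w x, 0 ≤ g w x ∧ g w x ≤ 1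

/-- Posterior g-vulnerability `V_g[π, C]`. -/
noncomputable def postV {W X Y : Type*} [Fintype W] [Nonempty W] [Fintype X] [Fintype Y]
    (π : X → ℝ) (g : W → X → ℝ) (C : X → Y → ℝ) : ℝ :=
  ∑ y, univ.sup' univ_nonempty fun w => ∑ x, C x y * π x * g w x

/-! Each refinement is witnessed by an explicit post-processing channel: forgetting the second
copy of the output of `C₁` (this needs the rows of `C₁` to sum to one), merging the two copies
of the outputs of `C₁`, and conversely sending an output of `C₁` to its first or second copy
with probabilities `q` and `1 - q`. The hidden-choice identity holds pointwise. -/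

lemma IsChannelOn.sum_eq_one {X Ω : Type*} [Fintype Ω] {S : Finset Ω} {C : X → Ω → ℝ}
    (h : IsChannelOn S C) (x : X) : ∑ y, C x y = 1 := by
  rw [← sum_subset (subset_univ S) fun y _ hy => h.2.2 x y hy]
  exact h.2.1 x

section DeterministicChannel

variable {Y Z : Type*} [DecidableEq Z]

def detChannel (f : Y → Z) : Y → Z → ℝ :=
  fun y z => if f y = z then 1 else 0

lemma isChannel_detChannel [Fintype Z] (f : Y → Z) : IsChannel (detChannel f) :=
  ⟨fun y z => by unfold detChannel; split_ifs <;> norm_num,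
    fun y => by simp [detChannel]⟩

lemma cascade_detChannel {X : Type*} [Fintype Y] (C : X → Y → ℝ) (f : Y → Z) (x : X) (z : Z) :
    cascade C (detChannel f) x z = ∑ y, if f y = z then C x y else 0 := by
  simp [cascade, detChannel, mul_ite]

end DeterministicChannel

section HiddenChoice

variable {X Y Z : Type*}

lemma isChannel_hid [Fintype Y] {D₁ D₂ : X → Y → ℝ} (h₁ : IsChannel D₁) (h₂ : IsChannel D₂)
    {q : ℝ} (hq : q ∈ Set.Icc (0:ℝ) 1) : IsChannel (hid q D₁ D₂) := by
  refine ⟨fun x y => ?_, fun x => ?_⟩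
  · exact add_nonneg (mul_nonneg hq.1 (h₁.1 x y)) (mul_nonneg (sub_nonneg.2 hq.2) (h₂.1 x y))
  · simp only [hid, sum_add_distrib, ← mul_sum, h₁.2 x, h₂.2 x]
    ring

lemma cascade_hid [Fintype Y] (C : X → Y → ℝ) (q : ℝ) (D₁ D₂ : Y → Z → ℝ) :
    cascade C (hid q D₁ D₂) = hid q (cascade C D₁) (cascade C D₂) := by
  funext x z
  simp only [cascade, hid, mul_add, sum_add_distrib, mul_sum]
  congr 1 <;> exact sum_congr rfl fun _ _ => by ring

lemma hid_left_distrib (p q : ℝ) (C₁ C₂ C₃ : X → Y → ℝ) :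
    hid p C₁ (hid q C₂ C₃) = hid q (hid p C₁ C₂) (hid p C₁ C₃) := by
  funext x y
  simp only [hid]
  ring

end HiddenChoice

section Distributivity

variable {X Y₁ Y₂ Y₃ : Type*} [Fintype Y₁] [Fintype Y₂] [Fintype Y₃]

lemma refines_par_left_distrib {C₁ : X → Y₁ → ℝ} (C₂ : X → Y₂ → ℝ) (C₃ : X → Y₃ → ℝ)
    (hC₁ : ∀ x, ∑ y, C₁ x y = 1) :
    Refines (par (par C₁ C₂) (par C₁ C₃)) (par C₁ (par C₂ C₃)) := by
  classical
  refine ⟨detChannel fun y => (y.1.1, (y.1.2, y.2.2)), isChannel_detChannel _, ?_⟩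
  funext x ⟨a, b, d⟩
  simp only [cascade_detChannel, par, Fintype.sum_prod_type, Prod.mk.injEq, ite_and,
    sum_ite_irrel, sum_ite_eq', mem_univ, if_true, sum_const_zero, ← mul_sum, ← sum_mul, hC₁]
  ring

lemma refines_vis_left_distrib (C₁ : X → Y₁ → ℝ) (C₂ : X → Y₂ → ℝ) (C₃ : X → Y₃ → ℝ)
    (p : ℝ) {q : ℝ} (hq : q ∈ Set.Icc (0:ℝ) 1) :
    Refines (vis p C₁ (vis q C₂ C₃)) (vis q (vis p C₁ C₂) (vis p C₁ C₃)) := by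
  classical
  let f : Y₁ ⊕ (Y₂ ⊕ Y₃) → (Y₁ ⊕ Y₂) ⊕ (Y₁ ⊕ Y₃) :=
    Sum.elim (Sum.inl ∘ Sum.inl) (Sum.map Sum.inr Sum.inr)
  let g : Y₁ ⊕ (Y₂ ⊕ Y₃) → (Y₁ ⊕ Y₂) ⊕ (Y₁ ⊕ Y₃) :=
    Sum.elim (Sum.inr ∘ Sum.inl) (Sum.map Sum.inr Sum.inr)
  refine ⟨hid q (detChannel f) (detChannel g),
    isChannel_hid (isChannel_detChannel f) (isChannel_detChannel g) hq, ?_⟩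
  rw [cascade_hid]
  funext x z
  rcases z with (z | z) | (z | z) <;>
    simp [hid, cascade_detChannel, vis, f, g, Fintype.sum_sum_type] <;> ring

lemma vis_left_distrib_refines (C₁ : X → Y₁ → ℝ) (C₂ : X → Y₂ → ℝ) (C₃ : X → Y₃ → ℝ)
    (p q : ℝ) : Refines (vis q (vis p C₁ C₂) (vis p C₁ C₃)) (vis p C₁ (vis q C₂ C₃)) := by
  classical
  let f : (Y₁ ⊕ Y₂) ⊕ (Y₁ ⊕ Y₃) → Y₁ ⊕ (Y₂ ⊕ Y₃) :=
    Sum.elim (Sum.map id Sum.inl) (Sum.map id Sum.inr)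
  refine ⟨detChannel f, isChannel_detChannel f, ?_⟩
  funext x z
  rcases z with z | z | z <;>
    simp [cascade_detChannel, vis, f, Fintype.sum_sum_type] <;> ring

end Distributivity

theorem distribution_over_same_operator_general {X Ω : Type*} [Fintype Ω]
    (Y₁ : Finset Ω) (C₁ C₂ C₃ : X → Ω → ℝ)
    (h₁ : IsChannelOn Y₁ C₁)
    (p q : ℝ) (hq : q ∈ Set.Icc (0:ℝ) 1) :
    Refines (par (par C₁ C₂) (par C₁ C₃)) (par C₁ (par C₂ C₃)) ∧
    EquivCh (vis p C₁ (vis q C₂ C₃)) (vis q (vis p C₁ C₂) (vis p C₁ C₃)) ∧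
    hid p C₁ (hid q C₂ C₃) = hid q (hid p C₁ C₂) (hid p C₁ C₃) :=
  ⟨refines_par_left_distrib C₂ C₃ h₁.sum_eq_one,
    ⟨refines_vis_left_distrib C₁ C₂ C₃ p hq, vis_left_distrib_refines C₁ C₂ C₃ p q⟩,
    hid_left_distrib p q C₁ C₂ C₃⟩

/-- Distribution of each operator over itself (Proposition: Distribution over
the same operator). -/
theorem distribution_over_same_operator {X Ω : Type*} [Fintype Ω]
    (Y₁ Y₂ Y₃ : Finset Ω) (C₁ C₂ C₃ : X → Ω → ℝ)
    (h₁ : IsChannelOn Y₁ C₁) (h₂ : IsChannelOn Y₂ C₂) (h₃ : IsChannelOn Y₃ C₃)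
    (p q : ℝ) (hp : p ∈ Set.Icc (0:ℝ) 1) (hq : q ∈ Set.Icc (0:ℝ) 1) :
    Refines (par (par C₁ C₂) (par C₁ C₃)) (par C₁ (par C₂ C₃)) ∧
    EquivCh (vis p C₁ (vis q C₂ C₃)) (vis q (vis p C₁ C₂) (vis p C₁ C₃)) ∧
    hid p C₁ (hid q C₂ C₃) = hid q (hid p C₁ C₂) (hid p C₁ C₃) :=
  distribution_over_same_operator_general Y₁ C₁ C₂ C₃ h₁ p q hq
end

section
/- Reassociation of alternating nested hidden choices: let n be a positive integer, A₀, A₁, …, A_n pairwise compatible channels with input set X, and q, p ∈ [0,1] not both 0. Define t_{2i} = 1 − (1−q)^{i+1}·(1−p)^i and t_{2i+1} = 1 − (1−q)^{i+1}·(1−p)^{i+1} for i ≥ 0. Then the right-nested hidden choice A₀ ⊕_{r₀} (A₁ ⊕_{r₁} ( … ⊕_{r_{n−1}} A_n)…), where r_i = q if i is even and r_i = p if i is odd, equals the left-nested hidden choice ((…((A₀ ⊕_{t₀/t₁} A₁) ⊕_{t₁/t₂} A₂) … ) ⊕_{t_{n−2}/t_{n−1}} A_{n−1}) ⊕_{t_{n−1}}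 A_n (note that t_k > 0 for all k ≥ 1 since q and p are not both 0). -/
open Finset

/-- `rightNest A r i k` is the right-nested hidden choice
`A i ⊕_{r i} (A (i+1) ⊕_{r (i+1)} (… ⊕_{r (i+k-1)} A (i+k))…)`. -/
noncomputable def rightNest {X Ω : Type*} (A : ℕ → X → Ω → ℝ) (r : ℕ → ℝ) : ℕ → ℕ → X → Ω → ℝ
  | i, 0 => A i
  | i, k + 1 => hid (r i) (A i) (rightNest A r (i + 1) k)

/-- `leftNest A t k` is the left-nested hidden choice
`((…((A 0 ⊕_{t 0 / t 1} A 1) ⊕_{t 1 / t 2} A 2) …) ⊕_{t (k-1) / t k} A k)`. -/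
noncomputable def leftNest {X Ω : Type*} (A : ℕ → X → Ω → ℝ) (t : ℕ → ℝ) : ℕ → X → Ω → ℝ
  | 0 => A 0
  | k + 1 => hid (t k / t (k + 1)) (leftNest A t k) (A (k + 1))

/-!
Both sides are linear combinations `∑ⱼ wⱼ • Aⱼ`, so it suffices to compare weights. The right
nesting puts `rⱼ ∏_{l<j} (1 - r_l)` on `Aⱼ` (and `∏_{l<n} (1 - r_l)` on `Aₙ`). In the left
nesting the ratios `t_{k-1} / t_k` telescope, leaving `t_j - t_{j-1}` on `Aⱼ`. The closed forms
of `t` say exactly that `t_j = 1 - ∏_{l≤j} (1 - r_l)`, the probability that the right nesting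
stops at one of `A₀, …, Aⱼ`, and then the two families of weights agree.
-/

theorem hid_eq_smul_add {X Ω : Type*} (p : ℝ) (C D : X → Ω → ℝ) :
    hid p C D = p • C + (1 - p) • D := rfl

theorem hid_self {X Ω : Type*} (p : ℝ) (C : X → Ω → ℝ) : hid p C C = C := by
  rw [hid_eq_smul_add, ← add_smul, add_sub_cancel, one_smul]

section Nesting

variable {X Ω : Type*} (A : ℕ → X → Ω → ℝ)

theorem rightNest_eq_sum (r : ℕ → ℝ) (k m : ℕ) :
    rightNest A r m k =
      ∑ j ∈ range k, ((∏ l ∈ range j, (1 - r (m + l))) * r (m + j)) • A (m + j)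
        + (∏ l ∈ range k, (1 - r (m + l))) • A (m + k) := by
  induction k generalizing m with
  | zero => simp [rightNest]
  | succ k ih =>
    simp only [rightNest, hid_eq_smul_add, ih, sum_range_succ' _ k, prod_range_succ',
      smul_add, smul_sum, smul_smul, add_right_comm m 1, add_zero, prod_range_zero, one_mul,
      mul_comm (1 - r m), mul_assoc, mul_right_comm _ (1 - r m)]
    abel

theorem leftNest_smul_eq_sum (t : ℕ → ℝ) (ht : ∀ k, t (k + 1) ≠ 0) (k : ℕ) :
    t k • leftNest A t k = t 0 • A 0 + ∑ j ∈ range k, (t (j + 1) - t j) • A (j + 1) := by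
  induction k with
  | zero => simp [leftNest]
  | succ k ih =>
    rw [leftNest, hid_eq_smul_add, sum_range_succ, ← add_assoc, ← ih, smul_add, smul_smul,
      smul_smul, mul_div_cancel₀ _ (ht k), mul_one_sub, mul_div_cancel₀ _ (ht k)]

theorem rightNest_eq_hid_leftNest (r t : ℕ → ℝ)
    (ht : ∀ j, t j = 1 - ∏ l ∈ range (j + 1), (1 - r l)) (ht_ne : ∀ k, t (k + 1) ≠ 0)
    (n : ℕ) :
    rightNest A r 0 (n + 1) = hid (t n) (leftNest A t n) (A (n + 1)) := by
  have ht_zero : t 0 = r 0 := by simp [ht]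
  have ht_succ_sub (j : ℕ) :
      t (j + 1) - t j = (∏ l ∈ range (j + 1), (1 - r l)) * r (j + 1) := by
    rw [ht, ht, prod_range_succ _ (j + 1)]
    ring
  have h_one_sub_t : 1 - t n = ∏ l ∈ range (n + 1), (1 - r l) := by rw [ht, sub_sub_cancel]
  rw [rightNest_eq_sum, hid_eq_smul_add, leftNest_smul_eq_sum A t ht_ne, sum_range_succ',
    ht_zero, h_one_sub_t]
  simp only [zero_add, ht_succ_sub, prod_range_zero, one_mul]
  abel

end Nesting

theorem prod_range_two_mul_ite_even {M : Type*} [CommMonoid M] (a b : M) (i : ℕ) :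
    ∏ l ∈ range (2 * i), (if Even l then a else b) = (a * b) ^ i := by
  induction i with
  | zero => simp
  | succ i ih =>
    rw [mul_add_one, prod_range_succ, prod_range_succ, ih, pow_succ, mul_assoc]
    simp

theorem prod_range_two_mul_one_sub_ite_even (q p : ℝ) (i : ℕ) :
    ∏ l ∈ range (2 * i), (1 - if Even l then q else p) = ((1 - q) * (1 - p)) ^ i := by
  rw [← prod_range_two_mul_ite_even]
  exact prod_congr rfl fun l _ => apply_ite (1 - ·) (Even l) q p

theorem prod_range_add_two_one_sub_ite_even_lt_one {q p : ℝ} (hq : q ∈ Set.Icc (0 : ℝ) 1)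
    (hp : p ∈ Set.Icc (0 : ℝ) 1) (hqp : ¬(q = 0 ∧ p = 0)) (k : ℕ) :
    ∏ l ∈ range (k + 2), (1 - if Even l then q else p) < 1 := by
  obtain ⟨hq0, hq1⟩ := hq
  obtain ⟨hp0, hp1⟩ := hp
  have h_range_two : ∏ l ∈ range 2, (1 - if Even l then q else p) = (1 - q) * (1 - p) := by
    simp [prod_range_succ]
  have h_range_two_lt : (1 - q) * (1 - p) < 1 := by
    rcases not_and_or.1 hqp with hq_ne | hp_ne
    · nlinarith [hq0.lt_of_ne' hq_ne]
    · nlinarith [hp0.lt_of_ne' hp_ne]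
  have h_factor (l : ℕ) :
      0 ≤ 1 - (if Even l then q else p) ∧ 1 - (if Even l then q else p) ≤ 1 := by
    split_ifs <;> constructor <;> linarith
  rw [add_comm, prod_range_add, h_range_two]
  exact mul_lt_one_of_nonneg_of_lt_one_left (mul_nonneg (by linarith) (by linarith))
    h_range_two_lt (prod_le_one (fun _ _ => (h_factor _).1) fun _ _ => (h_factor _).2)

theorem reassociation_of_nested_hidden_choices_general {X Ω : Type*}
    (n : ℕ)
    (A : ℕ → X → Ω → ℝ)
    (q p : ℝ) (hq : q ∈ Set.Icc (0:ℝ) 1) (hp : p ∈ Set.Icc (0:ℝ) 1)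
    (hqp : ¬(q = 0 ∧ p = 0))
    (t : ℕ → ℝ)
    (ht_even : ∀ i, t (2 * i) = 1 - (1 - q) ^ (i + 1) * (1 - p) ^ i)
    (ht_odd : ∀ i, t (2 * i + 1) = 1 - (1 - q) ^ (i + 1) * (1 - p) ^ (i + 1)) :
    rightNest A (fun i => if Even i then q else p) 0 n
      = hid (t (n - 1)) (leftNest A t (n - 1)) (A n) := by
  have ht (j : ℕ) : t j = 1 - ∏ l ∈ range (j + 1), (1 - if Even l then q else p) := by
    obtain ⟨i, rfl | rfl⟩ := Nat.even_or_odd' j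
    · rw [ht_even, prod_range_succ, prod_range_two_mul_one_sub_ite_even,
        if_pos (even_two_mul i), mul_pow, pow_succ (1 - q), mul_right_comm]
    · rw [ht_odd, show 2 * i + 1 + 1 = 2 * (i + 1) by ring,
        prod_range_two_mul_one_sub_ite_even, mul_pow]
  have ht_ne (k : ℕ) : t (k + 1) ≠ 0 :=
    ht (k + 1) ▸ (sub_pos.2 (prod_range_add_two_one_sub_ite_even_lt_one hq hp hqp k)).ne'
  cases n with
  | zero => simp [rightNest, leftNest, hid_self]
  | succ n => exact rightNest_eq_hid_leftNest A _ t ht ht_ne n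

/-- Reassociation of alternating nested hidden choices (Lemma on Crowds). -/
theorem reassociation_of_nested_hidden_choices {X Ω : Type*} [Fintype Ω]
    (n : ℕ) (hn : 0 < n)
    (A : ℕ → X → Ω → ℝ) (S : ℕ → Finset Ω)
    (hA : ∀ i ≤ n, IsChannelOn (S i) (A i))
    (q p : ℝ) (hq : q ∈ Set.Icc (0:ℝ) 1) (hp : p ∈ Set.Icc (0:ℝ) 1)
    (hqp : ¬(q = 0 ∧ p = 0))
    (t : ℕ → ℝ)
    (ht_even : ∀ i, t (2 * i) = 1 - (1 - q) ^ (i + 1) * (1 - p) ^ i)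
    (ht_odd : ∀ i, t (2 * i + 1) = 1 - (1 - q) ^ (i + 1) * (1 - p) ^ (i + 1)) :
    rightNest A (fun i => if Even i then q else p) 0 n
      = hid (t (n - 1)) (leftNest A t (n - 1)) (A n) :=
  reassociation_of_nested_hidden_choices_general n A q p hq hp hqp t ht_even ht_odd
end
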